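/- On a pseudo-Hermitian vector space (V,⟨·,·⟩,J), the map π₂H(x,y;z) := (1/6){2H(x,y;z) − H(y,z;x) − H(z,x;y) − 2H(x,Jy;Jz) + H(y,Jz;Jx) + H(z,Jx;Jy)} is a projection from 𝔥₋ onto W₂,₋ := {H ∈ 𝔥₋ : H(x,y;z) + H(y,z;x) + H(z,x;y) = 0 for all x,y,z}. -/
import Mathlib


/-- The map `π₂` on 3-tensors of a pseudo-Hermitian vector space. -/
noncomputable def piTwo {V : Type*} [AddCommGroup V] [Module ℝ V] (J : V →ₗ[ℝ] V)
    (H : V →ₗ[ℝ] V →ₗ[ℝ] V →ₗ[ℝ] ℝ) (x y z : V) : ℝ :=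
  (1/6) * (2 * H x y z - H y z x - H z x y
    - 2 * H x (J y) (J z) + H y (J z) (J x) + H z (J x) (J y))

/-- `π₂` is a projection from `𝔥₋` onto `W₂,₋`: for `H ∈ 𝔥₋`, `π₂H` again lies in `𝔥₋`
and satisfies the cyclic identity; and if `H ∈ W₂,₋` then `π₂H = H`. -/
theorem stmt_8 {V : Type*} [AddCommGroup V] [Module ℝ V]
    (B : V →ₗ[ℝ] V →ₗ[ℝ] ℝ) (J : V →ₗ[ℝ] V)
    (hBsymm : ∀ x y, B x y = B y x)
    (hBnd : ∀ x, (∀ y, B x y = 0) → x = 0)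
    (hJ2 : ∀ x, J (J x) = -x)
    (hJB : ∀ x y, B (J x) (J y) = B x y)
    (H : V →ₗ[ℝ] V →ₗ[ℝ] V →ₗ[ℝ] ℝ)
    (hH1 : ∀ x y z, H x y z = - H y x z)
    (hH2 : ∀ x y z, H (J x) (J y) z = - H x y z) :
    ((∀ x y z, piTwo J H x y z = - piTwo J H y x z) ∧
     (∀ x y z, piTwo J H (J x) (J y) z = - piTwo J H x y z) ∧
     (∀ x y z, piTwo J H x y z + piTwo J H y z x + piTwo J H z x y = 0)) ∧
    ((∀ x y z, H x y z + H y z x + H z x y = 0) → ∀ x y z, piTwo J H x y z = H x y z) := by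
  -- key derived identity: H (J a) b c = H a (J b) c
  have h4 : ∀ a b c, H (J a) b c = H a (J b) c := by
    intro a b c
    have e := hH2 b a c
    have e2 := hH2 (J b) a c
    rw [hJ2] at e2
    simp only [map_neg, LinearMap.neg_apply] at e2
    -- e2 : -(H b (J a) c) = - H (J b) a c
    have e3 : H (J b) a c = H b (J a) c := by linarith
    calc H (J a) b c = - H b (J a) c := hH1 (J a) b c
      _ = - H (J b) a c := by rw [e3]
      _ = H a (J b) c := by rw [hH1 (J b) a c]; ring
  have h3 : ∀ a b c, H a (J b) c = - H b (J a) c := by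
    intro a b c
    rw [← h4, hH1]
  refine ⟨⟨?_, ?_, ?_⟩, ?_⟩
  · intro x y z
    simp only [piTwo]
    have a1 := hH1 x y z
    have a2 := hH1 x z y
    have a3 := hH1 z y x
    have a4 := h3 y x (J z)
    have a5 := h3 x z (J y)
    have a6 := h3 y z (J x)
    linarith
  · intro x y z
    simp only [piTwo, hJ2]
    simp only [map_neg, LinearMap.neg_apply]
    have a1 := hH2 x y z
    have a2 := h4 y z (J x)
    have a3 := h4 x y (J z)
    have a4 := hH2 y z x
    linarith
  · intro x y z
    simp only [piTwo]
    ring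
  · intro hc x y z
    simp only [piTwo]
    have c1 := hc x y z
    have c2 := hc x (J y) (J z)
    have c3 := hc y (J z) (J x)
    have c4 := hc z (J x) (J y)
    have b1 := hH2 y z x
    have b2 := hH2 z x y
    have b3 := hH2 x y z
    have b4 := h4 z x (J y)
    have b5 := h4 x y (J z)
    have b6 := h4 y z (J x)
    linarith
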